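/- Fix a k-anxious root of unity α, let m be the smallest positive integer such that α^{k^m} = α, and let 𝒜 be the disjoint union of the sets A_{α^{k^i}} for 0 ≤ i ≤ m−1. Let (c_1,…,c_n) be a sequence of rational functions of arbitrary length n ≥ 1. If clm_{(a_i)}(c_i) ≥ 0 for every (a_i) ∈ 𝒜, then there exists a nonzero polynomial h ∈ K[z] such that no term of the sequence h*(c_i) has a pole at α^{k^i} for any i ≥ 0. -/

import Mathlib

open Polynomial

attribute [local instance] Classical.propDecidable

noncomputable section

variable {K : Type*} [Field K]

/-- Integer order of vanishing of a rational function at `α` (junk value `0` for `c = 0`). -/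
def vInt (α : K) (c : RatFunc K) : ℤ :=
  (c.num.rootMultiplicity α : ℤ) - (c.denom.rootMultiplicity α : ℤ)

/-- The `(z - α)`-adic valuation on `K(z)`, with `vAt α 0 = ⊤`. -/
def vAt (α : K) (c : RatFunc K) : WithTop ℤ :=
  if c = 0 then ⊤ else (vInt α c : WithTop ℤ)

/-- Substitution `z ↦ z^i` in a rational function. -/
def substPow (i : ℕ) (c : RatFunc K) : RatFunc K :=
  RatFunc.eval (algebraMap K (RatFunc K)) (RatFunc.X ^ i) c

/-- A polynomial viewed as a rational function. -/
def toRat (p : Polynomial K) : RatFunc K := algebraMap (Polynomial K) (RatFunc K) p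

/-- A rational function is a polynomial. -/
def IsPolyFun (c : RatFunc K) : Prop := ∃ p : Polynomial K, c = toRat p

def IsRootOfUnity (α : K) : Prop := ∃ m : ℕ, 0 < m ∧ α ^ m = 1

/-- `α` is `k`-calm: zero, or a root of unity whose order is not coprime to `k`. -/
def IsCalmNum (k : ℕ) (α : K) : Prop :=
  α = 0 ∨ (0 < orderOf α ∧ ¬ Nat.Coprime (orderOf α) k)

def IsAnxious (k : ℕ) (α : K) : Prop := ¬ IsCalmNum k α

/-- A rational function is `k`-calm: no poles at `k`-anxious numbers. -/
def IsCalmFun (k : ℕ) (c : RatFunc K) : Prop :=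
  ∀ α : K, IsAnxious k α → 0 ≤ vAt α c

/-- Action of a rational function `h` on a finite sequence `(c_1, …, c_n)`;
the index `i : Fin n` stands for the 1-based index `i+1`. -/
def act (k : ℕ) (h : RatFunc K) {n : ℕ} (c : Fin n → RatFunc K) : Fin n → RatFunc K :=
  fun i => substPow (k ^ (i.1 + 1)) h / h * c i

def IsPrecalmSeq (k : ℕ) {n : ℕ} (c : Fin n → RatFunc K) : Prop :=
  ∃ h : Polynomial K, h ≠ 0 ∧ ∀ i, IsCalmFun k (act k (toRat h) c i)

/-- Partial sums `ā_i = a_0 + … + a_{i-1}` of an infinite sequence with values in `{1,…,n}`. -/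
def abarInf {n : ℕ} (a : ℕ → Fin n) (i : ℕ) : ℕ :=
  ∑ j ∈ Finset.range i, ((a j).1 + 1)

/-- Partial sums for a finite sequence (a list). -/
def abarList {n : ℕ} (l : List (Fin n)) (i : ℕ) : ℕ :=
  ((l.take i).map (fun j => j.1 + 1)).sum

/-- Full sum `ā_μ` of a finite sequence. -/
def barSum {n : ℕ} (l : List (Fin n)) : ℕ := (l.map (fun j => j.1 + 1)).sum

/-- Calmness w.r.t. an anxious `α` that is not a root of unity and an infinite sequence. -/
def clmInf (k : ℕ) (α : K) {n : ℕ} (c : Fin n → RatFunc K) (a : ℕ → Fin n) : WithTop ℤ :=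
  if ∃ i, c (a i) = 0 then ⊤
  else ((∑ᶠ i : ℕ, vInt (α ^ k ^ abarInf a i) (c (a i)) : ℤ) : WithTop ℤ)

/-- Calmness w.r.t. an anxious root of unity `α` and a finite sequence. -/
def clmList (k : ℕ) (α : K) {n : ℕ} (c : Fin n → RatFunc K) (l : List (Fin n)) : WithTop ℤ :=
  ∑ i : Fin l.length, vAt (α ^ k ^ abarList l i.1) (c (l.get i))

/-- Calmness of a single rational function w.r.t. an anxious `α`. -/
def clmOne (k : ℕ) (α : K) (c : RatFunc K) : WithTop ℤ :=
  if hμ : ∃ μ : ℕ, 0 < μ ∧ α ^ k ^ μ = α then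
    ∑ i ∈ Finset.range (Nat.find hμ), vAt (α ^ k ^ i) c
  else if c = 0 then ⊤
  else ((∑ᶠ i : ℕ, vInt (α ^ k ^ i) c : ℤ) : WithTop ℤ)

/-- The `k`-kernel of a sequence. -/
def kernelSet (k : ℕ) (a : ℕ → K) : Set (ℕ → K) :=
  { b | ∃ e r : ℕ, r < k ^ e ∧ b = fun i => a (k ^ e * i + r) }

/-- `k`-regularity of a formal power series. -/
def IsRegularSeries (k : ℕ) (f : PowerSeries K) : Prop :=
  FiniteDimensional K (Submodule.span K (kernelSet k (fun i => PowerSeries.coeff (R := K) i f)))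

/-- Cartier operator `Λ_{k,r}`. -/
def cartier (k r : ℕ) (f : PowerSeries K) : PowerSeries K :=
  PowerSeries.mk fun i => PowerSeries.coeff (R := K) (k * i + r) f

/-- Substitution `z ↦ z^m` in a power series (for `m ≥ 1`). -/
def psSubstPow (m : ℕ) (f : PowerSeries K) : PowerSeries K :=
  PowerSeries.mk fun i => if m ∣ i then PowerSeries.coeff (R := K) (i / m) f else 0

/-- `f` satisfies the Mahler equation `f(z) = Σ_{i=1}^n c_i(z) f(z^{k^i})`. -/
def SatisfiesMahler (k : ℕ) {n : ℕ} (c : Fin n → RatFunc K) (f : PowerSeries K) : Prop :=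
  ∃ (q : Polynomial K) (p : Fin n → Polynomial K), q ≠ 0 ∧
    (∀ i, toRat q * c i = toRat (p i)) ∧
    (q : PowerSeries K) * f = ∑ i : Fin n, ((p i : PowerSeries K) * psSubstPow (k ^ (i.1 + 1)) f)

/-- Substitution `z ↦ z^m` in a formal Laurent series (for `m ≥ 1`). -/
def lsSubstPow (m : ℕ) (g : LaurentSeries K) : LaurentSeries K :=
  if h : 0 < m then
    HahnSeries.embDomain
      (OrderEmbedding.ofStrictMono (fun n : ℤ => (m : ℤ) * n)
        (fun a b hab => by
          exact mul_lt_mul_of_pos_left hab (by exact_mod_cast h))) g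
  else 0

/-- A Laurent series `g` satisfies the Mahler equation `g(z) = Σ_{i=1}^n b_i(z) g(z^{k^i})`
with polynomial coefficients. -/
def SatisfiesMahlerPolyLS (k : ℕ) {n : ℕ} (b : Fin n → Polynomial K) (g : LaurentSeries K) : Prop :=
  g = ∑ i : Fin n, (((b i : PowerSeries K) : LaurentSeries K) * lsSubstPow (k ^ (i.1 + 1)) g)

/-- Coefficients `d_{i,m}` of the special operators associated to `(c_1, …, c_n)`:
`dCoef k c m i` is `d_{i,m}`, with value `0` outside the range `1 ≤ i ≤ m + n`. -/
def dCoef (k : ℕ) {n : ℕ} (c : Fin n → RatFunc K) : ℕ → ℕ → RatFunc K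
  | 0 => fun i => if h : 1 ≤ i ∧ i ≤ n then c ⟨i - 1, by omega⟩ else 0
  | m + 1 => fun i =>
      if _h1 : i ≤ m then dCoef k c m i
      else if _h2 : i = m + 1 then 0
      else if h3 : i ≤ m + 1 + n then
        dCoef k c m i + dCoef k c m (m + 1) * substPow (k ^ (m + 1)) (c ⟨i - m - 2, by omega⟩)
      else 0

end

/-!
On the finite orbit `S = {α ^ k ^ j}` consider the labelled graph in which the label `i` leads
from `β` to `β ^ k ^ (i + 1)` with weight `v_β(c_i)` (an edge of weight `⊤`, i.e. `c_i = 0`,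
never constrains anything). The calmness of a sequence in `𝒜` is the weight of a closed walk, so
the hypothesis says that there are no negative cycles. As in the Bellman–Ford algorithm, the
potential `p u = max {d | some walk ending at u has weight ≤ -d}` is then finite, because cycles
can be cut out of long walks without increasing the weight, and it satisfies
`p β ≤ p (β ^ k ^ (i + 1)) + v_β(c_i)`. Since `β ≠ 0` and `k` is invertible in `K`,
`v_β(h(z ^ N)) = v_{β ^ N}(h)`, so `h = ∏_{β ∈ S} (z - β) ^ p β` does the job.
-/

section Walks

variable {V ι : Type*} (next : V → ι → V) (w : V → ι → WithTop ℤ)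

def walkEnd (v : V) (l : List ι) : V := l.foldl next v

def walkWeight : V → List ι → WithTop ℤ
  | _, [] => 0
  | v, i :: l => w v i + walkWeight (next v i) l

def walkDeficitSet (S : Finset V) (u : V) : Set ℕ :=
  {d | ∃ v ∈ S, ∃ l, walkEnd next v l = u ∧ walkWeight next w v l + d ≤ 0}

noncomputable def walkPotential (S : Finset V) (u : V) : ℕ := sSup (walkDeficitSet next w S u)

variable {next w}

@[simp]
lemma walkEnd_nil (v : V) : walkEnd next v [] = v := rfl

@[simp]
lemma walkEnd_cons (v : V) (i : ι) (l : List ι) :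
    walkEnd next v (i :: l) = walkEnd next (next v i) l := rfl

lemma walkEnd_append (v : V) (l₁ l₂ : List ι) :
    walkEnd next v (l₁ ++ l₂) = walkEnd next (walkEnd next v l₁) l₂ :=
  List.foldl_append

lemma walkWeight_append (v : V) (l₁ l₂ : List ι) :
    walkWeight next w v (l₁ ++ l₂) =
      walkWeight next w v l₁ + walkWeight next w (walkEnd next v l₁) l₂ := by
  induction l₁ generalizing v with
  | nil => simp [walkWeight]
  | cons i l ih => simp [walkWeight, ih, add_assoc]

variable {S : Finset V} (hS : ∀ v ∈ S, ∀ i, next v i ∈ S)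
include hS

lemma walkEnd_mem {v : V} (hv : v ∈ S) (l : List ι) : walkEnd next v l ∈ S := by
  induction l generalizing v with
  | nil => exact hv
  | cons i l ih => exact ih (hS v hv i)

lemma exists_cycle_of_card_lt_length {v : V} (hv : v ∈ S) {l : List ι}
    (hl : S.card < l.length) :
    ∃ l₁ c l₂, l = l₁ ++ c ++ l₂ ∧ c ≠ [] ∧ walkEnd next v (l₁ ++ c) = walkEnd next v l₁ := by
  obtain ⟨s, hs, t, ht, hst, hend⟩ := Finset.exists_ne_map_eq_of_card_lt_of_maps_to
    (s := Finset.range (S.card + 1)) (by simp) (f := fun s => walkEnd next v (l.take s))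
    (fun s _ => walkEnd_mem hS hv _)
  wlog hlt : s < t generalizing s t
  · exact this t ht s hs hst.symm hend.symm (by omega)
  simp only [Finset.mem_range] at hs ht
  refine ⟨l.take s, (l.drop s).take (t - s), (l.drop s).drop (t - s), by simp, ?_, ?_⟩
  · simp only [ne_eq, List.take_eq_nil_iff, List.drop_eq_nil_iff]
    omega
  · rw [← List.take_add, Nat.add_sub_cancel' hlt.le]
    exact hend.symm

variable (hcyc : ∀ v ∈ S, ∀ l, walkEnd next v l = v → 0 ≤ walkWeight next w v l)
include hcyc

lemma exists_short_walk {v : V} (hv : v ∈ S) (l : List ι) :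
    ∃ l', l'.length ≤ S.card ∧ walkEnd next v l' = walkEnd next v l ∧
      walkWeight next w v l' ≤ walkWeight next w v l := by
  induction hlen : l.length using Nat.strong_induction_on generalizing l with
  | _ L ih =>
    by_cases hl : l.length ≤ S.card
    · exact ⟨l, hl, rfl, le_rfl⟩
    obtain ⟨l₁, c, l₂, rfl, hc, hend⟩ := exists_cycle_of_card_lt_length hS hv (not_le.mp hl)
    have hshorter : (l₁ ++ l₂).length < L := by
      subst hlen; simpa using List.length_pos_iff.mpr hc
    obtain ⟨l', hl', hend', hweight'⟩ := ih _ hshorter (l₁ ++ l₂) rfl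
    refine ⟨l', hl', by rw [hend', walkEnd_append, walkEnd_append, hend], hweight'.trans ?_⟩
    have hc0 : 0 ≤ walkWeight next w (walkEnd next v l₁) c :=
      hcyc _ (walkEnd_mem hS hv l₁) c (by rw [← walkEnd_append, hend])
    rw [walkWeight_append, walkWeight_append, walkWeight_append, hend, add_assoc]
    gcongr
    exact le_add_of_nonneg_left hc0

lemma exists_walkWeight_add_nonneg [Finite ι] :
    ∃ B : ℕ, ∀ v ∈ S, ∀ l, 0 ≤ walkWeight next w v l + B := by
  have hfin : {l : List ι | l.length ≤ S.card}.Finite := List.finite_length_le ι S.card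
  have hB : ∀ᶠ B : ℕ in Filter.atTop, ∀ v ∈ S, ∀ l ∈ {l : List ι | l.length ≤ S.card},
      0 ≤ walkWeight next w v l + B := by
    refine (Filter.eventually_all_finset S).2 fun v _ => hfin.eventually_all.2 fun l _ => ?_
    induction walkWeight next w v l using WithTop.recTopCoe with
    | top => simp
    | coe x =>
      filter_upwards [Filter.eventually_ge_atTop (-x).toNat] with B hB
      exact_mod_cast (by omega : 0 ≤ x + B)
  obtain ⟨B, hB⟩ := hB.exists
  refine ⟨B, fun v hv l => ?_⟩
  obtain ⟨l', hl', -, hle⟩ := exists_short_walk hS hcyc hv l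
  exact (hB v hv l' hl').trans (by gcongr)

lemma bddAbove_walkDeficitSet [Finite ι] (u : V) : BddAbove (walkDeficitSet next w S u) := by
  obtain ⟨B, hB⟩ := exists_walkWeight_add_nonneg hS hcyc
  refine ⟨B, fun d ⟨v, hv, l, _, hd⟩ => ?_⟩
  have hB := hB v hv l
  generalize walkWeight next w v l = W at hd hB
  induction W using WithTop.recTopCoe with
  | top => simp at hd
  | coe x =>
    have : x + d ≤ 0 := by exact_mod_cast hd
    have : 0 ≤ x + B := by exact_mod_cast hB
    omega

lemma exists_walk_walkPotential [Finite ι] {u : V} (hu : u ∈ S) :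
    ∃ v ∈ S, ∃ l, walkEnd next v l = u ∧ walkWeight next w v l + walkPotential next w S u ≤ 0 :=
  Nat.sSup_mem (s := walkDeficitSet next w S u) ⟨0, u, hu, [], rfl, by simp [walkWeight]⟩
    (bddAbove_walkDeficitSet hS hcyc u)

lemma walkPotential_le_add [Finite ι] {u : V} (hu : u ∈ S) (i : ι) :
    (walkPotential next w S u : WithTop ℤ) ≤ walkPotential next w S (next u i) + w u i := by
  obtain ⟨v, hv, l, hend, hl⟩ := exists_walk_walkPotential hS hcyc hu
  have hext : walkWeight next w v (l ++ [i]) = walkWeight next w v l + w u i := by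
    simp [walkWeight_append, hend, walkWeight]
  generalize w u i = z at hext
  induction z using WithTop.recTopCoe with
  | top => simp
  | coe z =>
    set d := walkPotential next w S u
    set d' := walkPotential next w S (next u i)
    suffices (d : ℤ) ≤ d' + z by exact_mod_cast this
    by_cases hdz : (d : ℤ) ≤ z
    · omega
    -- extending the walk realising `d` by the edge `i` shows that `d - z` is a deficit at `next u i`
    have hmem : (d - z).toNat ≤ d' := by
      refine le_csSup (bddAbove_walkDeficitSet hS hcyc _) ⟨v, hv, l ++ [i], ?_, ?_⟩
      · rw [walkEnd_append, hend]; rfl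
      · rw [hext, add_assoc]
        convert hl using 2
        exact_mod_cast (by omega : z + ((d : ℤ) - z).toNat = d)
    omega

end Walks

section RationalFunctions

variable {K : Type*} [Field K]

lemma toRat_ne_zero {p : K[X]} (hp : p ≠ 0) : toRat p ≠ 0 :=
  RatFunc.algebraMap_ne_zero hp

lemma vInt_toRat_div (β : K) {p q : K[X]} (hp : p ≠ 0) (hq : q ≠ 0) :
    vInt β (toRat p / toRat q) = (p.rootMultiplicity β : ℤ) - q.rootMultiplicity β := by
  set c := toRat p / toRat q
  have hc : c ≠ 0 := div_ne_zero (toRat_ne_zero hp) (toRat_ne_zero hq)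
  have hcross : c.num * q = c.denom * p := by
    apply RatFunc.algebraMap_injective K
    have := (div_eq_div_iff (toRat_ne_zero c.denom_ne_zero) (toRat_ne_zero hq)).mp c.num_div_denom
    simp only [toRat] at this
    rw [map_mul, map_mul, this, mul_comm]
  have := congrArg (rootMultiplicity β) hcross
  rw [rootMultiplicity_mul (mul_ne_zero (RatFunc.num_ne_zero hc) hq),
    rootMultiplicity_mul (mul_ne_zero c.denom_ne_zero hp)] at this
  unfold vInt
  omega

lemma substPow_toRat (N : ℕ) (p : K[X]) : substPow N (toRat p) = toRat (p.comp (X ^ N)) := by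
  rw [substPow, toRat, RatFunc.eval_algebraMap, Algebra.algebraMap_self_apply, toRat, comp,
    hom_eval₂]
  congr 1
  rw [map_pow, RatFunc.algebraMap_X]

lemma rootMultiplicity_pow (β : K) (p : K[X]) (r : ℕ) :
    (p ^ r).rootMultiplicity β = r * p.rootMultiplicity β := by
  rw [← count_roots, roots_pow, Multiset.count_nsmul, count_roots]

lemma rootMultiplicity_X_pow_sub_C_pow {β : K} (hβ : β ≠ 0) {N : ℕ} (hN : (N : K) ≠ 0) :
    (X ^ N - C (β ^ N)).rootMultiplicity β = 1 := by
  have hsep := separable_X_pow_sub_C (β ^ N) hN (pow_ne_zero N hβ)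
  have hpos : 0 < (X ^ N - C (β ^ N)).rootMultiplicity β :=
    (rootMultiplicity_pos hsep.ne_zero).mpr (by simp)
  have := rootMultiplicity_le_one_of_separable hsep β
  omega

lemma rootMultiplicity_comp_X_pow {β : K} (hβ : β ≠ 0) {N : ℕ} (hN : (N : K) ≠ 0)
    {p : K[X]} (hp : p ≠ 0) :
    (p.comp (X ^ N)).rootMultiplicity β = p.rootMultiplicity (β ^ N) := by
  obtain ⟨g, hfac, hg⟩ := p.exists_eq_pow_rootMultiplicity_mul_and_not_dvd hp (β ^ N)
  have hgβ : ¬ (g.comp (X ^ N)).IsRoot β := by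
    rw [dvd_iff_isRoot] at hg
    simpa [IsRoot, eval_comp] using hg
  have hsep := separable_X_pow_sub_C (β ^ N) hN (pow_ne_zero N hβ)
  have hcomp : p.comp (X ^ N) =
      (X ^ N - C (β ^ N)) ^ p.rootMultiplicity (β ^ N) * g.comp (X ^ N) := by
    conv_lhs => rw [hfac]
    simp [mul_comp, sub_comp]
  have hg0 : g.comp (X ^ N) ≠ 0 := fun h0 => hgβ (by simp [h0])
  rw [hcomp, rootMultiplicity_mul (mul_ne_zero (pow_ne_zero _ hsep.ne_zero) hg0),
    rootMultiplicity_pow, rootMultiplicity_X_pow_sub_C_pow hβ hN, rootMultiplicity_eq_zero hgβ]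
  ring

lemma exists_rootMultiplicity_eq (S : Finset K) (f : K → ℕ) :
    ∃ p : K[X], p ≠ 0 ∧ ∀ β ∈ S, p.rootMultiplicity β = f β := by
  set s : Multiset K := ∑ β ∈ S, Multiset.replicate (f β) β
  refine ⟨(s.map fun β => X - C β).prod, (monic_multiset_prod_of_monic _ _
    fun β _ => monic_X_sub_C β).ne_zero, fun β hβ => ?_⟩
  rw [← count_roots, roots_multiset_prod_X_sub_C, Multiset.count_sum']
  simp [Multiset.count_replicate, hβ]

lemma vInt_substPow_div_mul {β : K} (hβ : β ≠ 0) {N : ℕ} (hN : (N : K) ≠ 0) {h : K[X]}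
    (hh : h ≠ 0) {c : RatFunc K} (hc : c ≠ 0) :
    substPow N (toRat h) / toRat h * c ≠ 0 ∧
      vInt β (substPow N (toRat h) / toRat h * c) =
        (h.rootMultiplicity (β ^ N) : ℤ) - h.rootMultiplicity β + vInt β c := by
  have hcomp : h.comp (X ^ N) ≠ 0 := by
    rw [← expand_eq_comp_X_pow]
    exact (expand_ne_zero (Nat.pos_of_ne_zero (by rintro rfl; simp at hN))).mpr hh
  have hnum : h.comp (X ^ N) * c.num ≠ 0 := mul_ne_zero hcomp (RatFunc.num_ne_zero hc)
  have hden : h * c.denom ≠ 0 := mul_ne_zero hh c.denom_ne_zero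
  have hquot : substPow N (toRat h) / toRat h * c =
      toRat (h.comp (X ^ N) * c.num) / toRat (h * c.denom) := by
    conv_lhs => rw [substPow_toRat, ← c.num_div_denom, div_mul_div_comm]
    simp only [toRat, map_mul]
  refine ⟨hquot ▸ div_ne_zero (toRat_ne_zero hnum) (toRat_ne_zero hden), ?_⟩
  rw [hquot, vInt_toRat_div β hnum hden, rootMultiplicity_mul hnum, rootMultiplicity_mul hden,
    rootMultiplicity_comp_X_pow hβ hN hh, vInt]
  push_cast
  ring

lemma vAt_act_nonneg {k : ℕ} (hk : (k : K) ≠ 0) {β : K} (hβ : β ≠ 0) {h : K[X]} (hh : h ≠ 0)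
    {n : ℕ} {c : Fin n → RatFunc K} {i : Fin n}
    (hmult : (h.rootMultiplicity β : WithTop ℤ) ≤
      h.rootMultiplicity (β ^ k ^ (i.1 + 1)) + vAt β (c i)) :
    0 ≤ vAt β (act k (toRat h) c i) := by
  by_cases hci : c i = 0
  · simp [act, hci, vAt]
  have hN : ((k ^ (i.1 + 1) : ℕ) : K) ≠ 0 := by
    push_cast
    exact pow_ne_zero _ hk
  obtain ⟨hne, hv⟩ := vInt_substPow_div_mul hβ hN hh hci
  rw [vAt, if_neg hci] at hmult
  have : (h.rootMultiplicity β : ℤ) ≤ h.rootMultiplicity (β ^ k ^ (i.1 + 1)) + vInt β (c i) := by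
    exact_mod_cast hmult
  rw [act, vAt, if_neg hne, hv]
  exact WithTop.coe_nonneg.2 (by omega)

end RationalFunctions

section OrbitOfPowers

variable {K : Type*} [Field K]

lemma natCast_ne_zero_of_forall_not_dvd {k : ℕ} (hk : k ≠ 0)
    (hch : ∀ p : ℕ, p.Prime → CharP K p → ¬ p ∣ k) : (k : K) ≠ 0 := by
  have := ringChar.charP K
  rw [ne_eq, CharP.cast_eq_zero_iff K (ringChar K)]
  rcases CharP.char_is_prime_or_zero K (ringChar K) with hp | hp
  · exact hch _ hp this
  · rwa [hp, zero_dvd_iff]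

lemma pow_pow_pow_add (α : K) (k a b : ℕ) : (α ^ k ^ a) ^ k ^ b = α ^ k ^ (a + b) := by
  rw [← pow_mul, ← pow_add]

lemma pow_pow_mod {α : K} {k m : ℕ} (hm : α ^ k ^ m = α) (a : ℕ) :
    α ^ k ^ a = α ^ k ^ (a % m) := by
  have hper : Function.IsPeriodicPt (· ^ k) m α := by
    simpa [Function.IsPeriodicPt, Function.IsFixedPt, pow_iterate] using hm
  simpa [pow_iterate] using (hper.iterate_mod_apply a).symm

variable (k : ℕ) {n : ℕ} (c : Fin n → RatFunc K)

lemma clmList_cons (β : K) (i : Fin n) (l : List (Fin n)) :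
    clmList k β c (i :: l) = vAt β (c i) + clmList k (β ^ k ^ (i.1 + 1)) c l := by
  unfold clmList
  show (∑ j : Fin (l.length + 1), vAt (β ^ k ^ abarList (i :: l) j.1) (c ((i :: l).get j))) = _
  rw [Fin.sum_univ_succ]
  refine congrArg₂ (· + ·) (by simp [abarList]) (Finset.sum_congr rfl fun j _ => ?_)
  have : abarList (i :: l) (j.succ : Fin (l.length + 1)).1 = (i.1 + 1) + abarList l j.1 := by
    simp [abarList, List.take_succ_cons, Fin.val_succ]
  rw [this, ← pow_pow_pow_add]
  rfl

lemma walkEnd_pow (β : K) (l : List (Fin n)) :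
    walkEnd (fun β (i : Fin n) => β ^ k ^ (i.1 + 1)) β l = β ^ k ^ barSum l := by
  induction l generalizing β with
  | nil => simp [barSum]
  | cons i l ih => simp [ih, barSum, pow_pow_pow_add]

lemma walkWeight_vAt_eq_clmList (β : K) (l : List (Fin n)) :
    walkWeight (fun β (i : Fin n) => β ^ k ^ (i.1 + 1)) (fun β i => vAt β (c i)) β l =
      clmList k β c l := by
  induction l generalizing β with
  | nil => simp [walkWeight, clmList]
  | cons i l ih => rw [walkWeight, ih, clmList_cons]

end OrbitOfPowers

theorem stmt14_general {K : Type*} [Field K] (k : ℕ) (hk : 2 ≤ k)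
    (hch : ∀ p : ℕ, p.Prime → CharP K p → ¬ p ∣ k)
    (α : K) (hα : IsAnxious k α)
    (m : ℕ) (hm : 0 < m) (hmfix : α ^ k ^ m = α)
    {n : ℕ} (c : Fin n → RatFunc K)
    (hclm : ∀ i : ℕ, i < m → ∀ l : List (Fin n),
      α ^ k ^ (i + barSum l) = α ^ k ^ i → 0 ≤ clmList k (α ^ k ^ i) c l) :
    ∃ h : Polynomial K, h ≠ 0 ∧
      ∀ (j : ℕ) (i : Fin n), 0 ≤ vAt (α ^ k ^ j) (act k (toRat h) c i) := by
  set S := (Finset.range m).image fun j => α ^ k ^ j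
  set next : K → Fin n → K := fun β i => β ^ k ^ (i.1 + 1)
  set w : K → Fin n → WithTop ℤ := fun β i => vAt β (c i)
  have horbit : ∀ j, α ^ k ^ j ∈ S := fun j => Finset.mem_image.2
    ⟨j % m, Finset.mem_range.2 (Nat.mod_lt _ hm), (pow_pow_mod hmfix j).symm⟩
  have hS : ∀ β ∈ S, ∀ i, next β i ∈ S := by
    rintro _ hβ i
    obtain ⟨j, -, rfl⟩ := Finset.mem_image.1 hβ
    simpa only [next, pow_pow_pow_add] using horbit _
  have hcyc : ∀ β ∈ S, ∀ l, walkEnd next β l = β → 0 ≤ walkWeight next w β l := by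
    rintro _ hβ l hl
    obtain ⟨j, hj, rfl⟩ := Finset.mem_image.1 hβ
    rw [walkEnd_pow, pow_pow_pow_add] at hl
    rw [walkWeight_vAt_eq_clmList]
    exact hclm j (Finset.mem_range.1 hj) l hl
  obtain ⟨h, hh, hmult⟩ := exists_rootMultiplicity_eq S (walkPotential next w S)
  have hkK : (k : K) ≠ 0 := natCast_ne_zero_of_forall_not_dvd (by omega) hch
  refine ⟨h, hh, fun j i => vAt_act_nonneg hkK (pow_ne_zero _ fun h0 => hα (Or.inl h0)) hh ?_⟩
  rw [hmult _ (horbit j), hmult _ (hS _ (horbit j) i)]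
  exact walkPotential_le_add hS hcyc (horbit j) i

theorem stmt14 {K : Type*} [Field K] [IsAlgClosed K] (k : ℕ) (hk : 2 ≤ k)
    (hch : ∀ p : ℕ, p.Prime → CharP K p → ¬ p ∣ k)
    (α : K) (hα : IsAnxious k α) (hru : IsRootOfUnity α)
    (m : ℕ) (hm : 0 < m) (hmfix : α ^ k ^ m = α)
    (hmin : ∀ m' : ℕ, 0 < m' → α ^ k ^ m' = α → m ≤ m')
    {n : ℕ} (hn : 1 ≤ n) (c : Fin n → RatFunc K)
    (hclm : ∀ i : ℕ, i < m → ∀ l : List (Fin n),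
      α ^ k ^ (i + barSum l) = α ^ k ^ i → 0 ≤ clmList k (α ^ k ^ i) c l) :
    ∃ h : Polynomial K, h ≠ 0 ∧
      ∀ (j : ℕ) (i : Fin n), 0 ≤ vAt (α ^ k ^ j) (act k (toRat h) c i) :=
  stmt14_general k hk hch α hα m hm hmfix c hclm
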